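/- arXiv:1812.08715 — 2 statements merged into one kernel-verified Lean document; each statement's English description precedes it below -/
import Mathlib

section
/- Let $B$ be a finite dimensional associative algebra over a field $F$ of characteristic zero, and let $L$ be a Lie algebra acting on $B$ by derivations. If $B$ is $L$-simple (that is, $B^2 \neq \{0\}$ and $B$ has no two-sided ideals invariant under the $L$-action other than $\{0\}$ and $B$), then $B$ is simple as an associative algebra. -/
/-!
The trace form `(x, y) ↦ tr(z ↦ x y z)` of `B` is skew for every derivation, so its radical is
an `L`-ideal; it does not contain `1` because `tr(id) = dim B ≠ 0` in characteristic zero, hence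
it vanishes. For a two-sided ideal `I`, the powers `x ^ k` (`k ≥ 2`) of any `x ∈ I ∩ I^⊥` are
traceless, so `x` is nilpotent; as `I ∩ I^⊥` is an ideal, it lies in the radical: `B = I ⊕ I^⊥`.
Writing `1 = e + f` accordingly, `e` is a central idempotent acting as the identity on `I`; a
derivation `δ` kills such an `e`, so `δ x = δ (e x) = e δ x ∈ I` for `x ∈ I` and every ideal is an `L`-ideal.
-/

open Module

namespace LinearMap

variable {R M N : Type*} [CommRing R] [AddCommGroup M] [Module R M] [AddCommGroup N] [Module R N]

theorem comp_pow_succ (c : M →ₗ[R] N) (s : N →ₗ[R] M) (k : ℕ) :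
    (c ∘ₗ s) ^ (k + 1) = c ∘ₗ ((s ∘ₗ c) ^ k) ∘ₗ s := by
  induction k with
  | zero => rfl
  | succ k ih =>
    rw [pow_succ, ih, pow_succ]
    rfl

theorem isNilpotent_comp_comm {c : M →ₗ[R] N} {s : N →ₗ[R] M} (h : IsNilpotent (c ∘ₗ s)) :
    IsNilpotent (s ∘ₗ c) := by
  obtain ⟨n, hn⟩ := h
  exact ⟨n + 1, by rw [comp_pow_succ, hn, zero_comp, comp_zero]⟩

theorem trace_comp_pow_succ_comm [Free R M] [Module.Finite R M] [Free R N] [Module.Finite R N]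
    (c : M →ₗ[R] N) (s : N →ₗ[R] M) (k : ℕ) :
    trace R N ((c ∘ₗ s) ^ (k + 1)) = trace R M ((s ∘ₗ c) ^ (k + 1)) := by
  rw [comp_pow_succ, ← trace_comp_comm', pow_succ]
  rfl

section Field

variable {F M : Type*} [Field F] [CharZero F] [AddCommGroup M] [Module F M] [FiniteDimensional F M]

theorem not_injective_of_trace_pow_eq_zero [Nontrivial M] {f : End F M}
    (hf : ∀ k, 0 < k → trace F M (f ^ k) = 0) : ¬ Function.Injective f := by
  have hc : f.charpoly.coeff 0 = 0 := by
    -- the trace of Cayley–Hamilton reduces to `χ_f(0) * dim M = 0`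
    have htr := congrArg (trace F M) f.aeval_self_charpoly
    rw [Polynomial.aeval_eq_sum_range, map_sum, map_zero,
      Finset.sum_eq_single 0 (fun i _ hi => by rw [map_smul, hf i (Nat.pos_of_ne_zero hi),
        smul_zero]) (by simp), map_smul, pow_zero, trace_one, smul_eq_mul] at htr
    exact (mul_eq_zero.mp htr).resolve_right (Nat.cast_ne_zero.mpr finrank_pos.ne')
  obtain ⟨m, hm, hfm⟩ := (charpoly_constantCoeff_eq_zero_iff f).mp hc
  exact fun hinj => hm (hinj (hfm.trans (map_zero f).symm))

theorem isNilpotent_of_trace_pow_eq_zero {f : End F M}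
    (hf : ∀ k, 0 < k → trace F M (f ^ k) = 0) : IsNilpotent f := by
  induction h : finrank F M using Nat.strong_induction_on generalizing M with
  | _ n ih =>
    cases subsingleton_or_nontrivial M
    · exact ⟨1, Subsingleton.elim _ _⟩
    have hrange : finrank F (range f) < n := h ▸ Submodule.finrank_lt fun htop =>
      not_injective_of_trace_pow_eq_zero hf (injective_iff_surjective.mpr (range_eq_top.mp htop))
    -- `f` factors through its proper range, and the reversed composite has the same power traces
    have hu : IsNilpotent (f.rangeRestrict ∘ₗ (range f).subtype) :=
      ih _ hrange (fun k hk => by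
        obtain ⟨j, rfl⟩ := Nat.exists_eq_add_of_lt hk
        rw [trace_comp_pow_succ_comm]
        exact hf _ (by omega)) rfl
    exact isNilpotent_comp_comm hu

end Field

end LinearMap

section Leibniz

variable {R : Type*} [Ring R] {δ : R → R}

theorem IsIdempotentElem.apply_eq_zero_of_leibniz
    (hδ : ∀ x y, δ (x * y) = δ x * y + x * δ y) {e : R} (he : IsIdempotentElem e)
    (hc : Commute e (δ e)) : δ e = 0 := by
  have hδe : δ e = e * δ e + e * δ e := by
    conv_lhs => rw [← he.eq, hδ, ← hc.eq]
  have h : e * δ e = 0 := by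
    have : e * δ e = e * δ e + e * δ e := by
      conv_lhs => rw [hδe, mul_add, ← mul_assoc, he.eq]
    simpa using this
  rw [hδe, h, add_zero]

theorem TwoSidedIdeal.apply_mem_of_mul_eq_self
    (hδ : ∀ x y, δ (x * y) = δ x * y + x * δ y) {I : TwoSidedIdeal R} {e : R} (he : e ∈ I)
    (hunit : ∀ x ∈ I, e * x = x ∧ x * e = x) {x : R} (hx : x ∈ I) : δ x ∈ I := by
  have hcomm (b : R) : Commute e b := by
    calc e * b = e * b * e := ((hunit _ (I.mul_mem_right _ _ he)).2).symm
      _ = b * e := by rw [mul_assoc, (hunit _ (I.mul_mem_left _ _ he)).1]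
  have hδe : δ e = 0 := IsIdempotentElem.apply_eq_zero_of_leibniz hδ (hunit e he).1 (hcomm _)
  rw [← (hunit x hx).1, hδ, hδe, zero_mul, zero_add]
  exact I.mul_mem_right _ _ he

end Leibniz

section MulTrace

variable (F B : Type*) [Field F] [Ring B] [Algebra F B]

-- `Algebra.trace` requires a commutative algebra
noncomputable def mulTrace : B →ₗ[F] F :=
  LinearMap.trace F B ∘ₗ (Algebra.lmul F B).toLinearMap

noncomputable def mulTraceForm : LinearMap.BilinForm F B :=
  (LinearMap.mul F B).compr₂ (mulTrace F B)

variable {F B}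

theorem mulTrace_apply (x : B) : mulTrace F B x = LinearMap.trace F B (Algebra.lmul F B x) :=
  rfl

theorem mulTrace_mul_comm (x y : B) : mulTrace F B (x * y) = mulTrace F B (y * x) := by
  simp only [mulTrace_apply, map_mul]
  exact LinearMap.trace_mul_comm F _ _

variable (F B) in
theorem mulTrace_one [FiniteDimensional F B] : mulTrace F B 1 = finrank F B := by
  rw [mulTrace_apply, map_one, LinearMap.trace_one]

theorem mulTrace_eq_zero_of_isNilpotent {x : B} (hx : IsNilpotent x) : mulTrace F B x = 0 :=
  (LinearMap.isNilpotent_trace_of_isNilpotent (hx.map (Algebra.lmul F B))).eq_zero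

theorem isNilpotent_of_mulTrace_pow_eq_zero [CharZero F] [FiniteDimensional F B] {x : B}
    (hx : ∀ k, 0 < k → mulTrace F B (x ^ k) = 0) : IsNilpotent x := by
  obtain ⟨n, hn⟩ := LinearMap.isNilpotent_of_trace_pow_eq_zero (f := Algebra.lmul F B x)
    fun k hk => by rw [← map_pow]; exact hx k hk
  exact ⟨n, Algebra.lmul_injective (R := F) (by rw [map_pow, hn, map_zero])⟩

theorem mulTrace_apply_eq_zero_of_leibniz {δ : Module.End F B}
    (hδ : ∀ x y, δ (x * y) = δ x * y + x * δ y) (z : B) : mulTrace F B (δ z) = 0 := by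
  have hcomm : Algebra.lmul F B (δ z) = δ * Algebra.lmul F B z - Algebra.lmul F B z * δ := by
    ext y
    simp [hδ]
  rw [mulTrace_apply, hcomm, map_sub, LinearMap.trace_mul_comm, sub_self]

theorem mulTraceForm_isSymm : (mulTraceForm F B).IsSymm :=
  ⟨fun x y => mulTrace_mul_comm x y⟩

variable (F B) in
def mulTraceRadical : TwoSidedIdeal B :=
  .mk' {x | ∀ y, mulTrace F B (x * y) = 0} (by simp)
    (fun hx hy z => by rw [add_mul, map_add, hx, hy, add_zero])
    (fun hx z => by rw [neg_mul, map_neg, hx, neg_zero])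
    (fun {x y} hy z => by rw [mul_assoc, mulTrace_mul_comm, mul_assoc, hy])
    (fun {x y} hx z => by rw [mul_assoc, hx])

theorem mem_mulTraceRadical {x : B} : x ∈ mulTraceRadical F B ↔ ∀ y, mulTrace F B (x * y) = 0 :=
  TwoSidedIdeal.mem_mk' ..

theorem apply_mem_mulTraceRadical {δ : Module.End F B}
    (hδ : ∀ x y, δ (x * y) = δ x * y + x * δ y) {x : B} (hx : x ∈ mulTraceRadical F B) :
    δ x ∈ mulTraceRadical F B := by
  rw [mem_mulTraceRadical] at hx ⊢
  intro y
  have h := mulTrace_apply_eq_zero_of_leibniz hδ (x * y)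
  rwa [hδ, map_add, hx, add_zero] at h

variable (F B) in
theorem mulTraceRadical_ne_top [CharZero F] [FiniteDimensional F B] [Nontrivial B] :
    mulTraceRadical F B ≠ ⊤ := by
  rw [ne_eq, ← TwoSidedIdeal.one_mem_iff, mem_mulTraceRadical]
  intro h
  have h1 := h 1
  rw [one_mul, mulTrace_one] at h1
  exact finrank_pos.ne' (Nat.cast_eq_zero.mp h1)

end MulTrace

section Nondegenerate

variable {F B : Type*} [Field F] [CharZero F] [Ring B] [Algebra F B] [FiniteDimensional F B]

theorem isNilpotent_of_mem_of_mulTrace_mul_eq_zero {I : TwoSidedIdeal B} {x : B} (hx : x ∈ I)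
    (hxI : ∀ j ∈ I, mulTrace F B (x * j) = 0) : IsNilpotent x := by
  have hpow (k : ℕ) : x ^ (k + 1) ∈ I := by rw [pow_succ']; exact I.mul_mem_right _ _ hx
  -- only the traces of `x ^ k` with `k ≥ 2` are known to vanish, so pass to `x ^ 2`
  refine IsNilpotent.of_pow (m := 2) (isNilpotent_of_mulTrace_pow_eq_zero (F := F) fun k hk => ?_)
  obtain ⟨j, rfl⟩ := Nat.exists_eq_add_of_lt hk
  rw [← pow_mul, show 2 * (0 + j + 1) = 2 * j + 1 + 1 by ring, pow_succ']
  exact hxI _ (hpow _)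

theorem eq_zero_of_mem_of_mulTrace_mul_eq_zero (hrad : mulTraceRadical F B = ⊥)
    {I : TwoSidedIdeal B} {z : B} (hz : z ∈ I) (hzI : ∀ j ∈ I, mulTrace F B (z * j) = 0) :
    z = 0 := by
  rw [← TwoSidedIdeal.mem_bot, ← hrad, mem_mulTraceRadical]
  refine fun y => mulTrace_eq_zero_of_isNilpotent <|
    isNilpotent_of_mem_of_mulTrace_mul_eq_zero (F := F) (I.mul_mem_right _ _ hz) fun j hj => ?_
  rw [mul_assoc]
  exact hzI _ (I.mul_mem_left _ _ hj)

theorem exists_mem_forall_mul_eq_self (hrad : mulTraceRadical F B = ⊥) (I : TwoSidedIdeal B) :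
    ∃ e ∈ I, ∀ x ∈ I, e * x = x ∧ x * e = x := by
  set W : Submodule F B := I.asIdeal.restrictScalars F
  have hW (x : B) : x ∈ W ↔ x ∈ I := TwoSidedIdeal.mem_asIdeal
  have hcompl : IsCompl W ((mulTraceForm F B).orthogonal W) := by
    refine (LinearMap.BilinForm.isCompl_orthogonal_iff_disjoint
      mulTraceForm_isSymm.isRefl).mpr (Submodule.disjoint_def.mpr fun z hz hzo => ?_)
    refine eq_zero_of_mem_of_mulTrace_mul_eq_zero hrad ((hW z).mp hz) fun j hj => ?_
    rw [mulTrace_mul_comm]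
    exact (LinearMap.BilinForm.mem_orthogonal_iff.mp hzo) j ((hW j).mpr hj)
  obtain ⟨e, he, f, hf, hef⟩ :=
    Submodule.mem_sup.mp (hcompl.sup_eq_top ▸ Submodule.mem_top : (1 : B) ∈ W ⊔ _)
  have hfI (j : B) (hj : j ∈ I) : mulTrace F B (j * f) = 0 :=
    LinearMap.BilinForm.mem_orthogonal_iff.mp hf j ((hW j).mpr hj)
  have hmulf (a : B) (ha : a ∈ I) : a * f = 0 :=
    eq_zero_of_mem_of_mulTrace_mul_eq_zero hrad (I.mul_mem_right _ _ ha) fun j hj => by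
      rw [mulTrace_mul_comm, ← mul_assoc]
      exact hfI _ (I.mul_mem_left _ _ ha)
  have hfmul (a : B) (ha : a ∈ I) : f * a = 0 :=
    eq_zero_of_mem_of_mulTrace_mul_eq_zero hrad (I.mul_mem_left _ _ ha) fun j hj => by
      rw [mul_assoc, mulTrace_mul_comm]
      exact hfI _ (I.mul_mem_right _ _ ha)
  rw [← eq_sub_iff_add_eq] at hef
  refine ⟨e, (hW e).mp he, fun x hx => ⟨?_, ?_⟩⟩
  · rw [hef, sub_mul, one_mul, hfmul x hx, sub_zero]
  · rw [hef, mul_sub, mul_one, hmulf x hx, sub_zero]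

end Nondegenerate

attribute [local instance 100] LieRing.ofAssociativeRing

theorem L_simple_implies_simple_general (F : Type*) (B : Type*) (L : Type*) [Field F] [CharZero F]
    [Ring B] [Algebra F B] [FiniteDimensional F B] [LieRing L] [LieAlgebra F L]
    (ρ : L →ₗ⁅F⁆ Module.End F B)
    (hder : ∀ l : L, ∀ x y : B, ρ l (x * y) = ρ l x * y + x * ρ l y)
    (hLsimple : ∀ I : TwoSidedIdeal B, (∀ l : L, ∀ x ∈ I, ρ l x ∈ I) → I = ⊥ ∨ I = ⊤) :
    ∀ I : TwoSidedIdeal B, I = ⊥ ∨ I = ⊤ := by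
  intro I
  cases subsingleton_or_nontrivial B
  · exact Or.inl (TwoSidedIdeal.ext fun x => by simp [Subsingleton.elim x 0])
  have hrad : mulTraceRadical F B = ⊥ :=
    (hLsimple _ fun l _ => apply_mem_mulTraceRadical (hder l)).resolve_right
      (mulTraceRadical_ne_top F B)
  obtain ⟨e, he, hunit⟩ := exists_mem_forall_mul_eq_self hrad I
  exact hLsimple I fun l _ => I.apply_mem_of_mul_eq_self (hder l) he hunit

/-- Let `B` be a finite dimensional associative algebra over a field `F` of characteristic
zero, and let `L` be a Lie algebra acting on `B` by derivations. If `B` is `L`-simple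
(`B² ≠ 0` and the only two-sided ideals invariant under the `L`-action are `⊥` and `⊤`),
then `B` is simple as an associative algebra (`B² ≠ 0` and its only two-sided ideals are
`⊥` and `⊤`). -/
theorem L_simple_implies_simple (F : Type*) (B : Type*) (L : Type*) [Field F] [CharZero F]
    [Ring B] [Algebra F B] [FiniteDimensional F B] [LieRing L] [LieAlgebra F L]
    (ρ : L →ₗ⁅F⁆ Module.End F B)
    (hder : ∀ l : L, ∀ x y : B, ρ l (x * y) = ρ l x * y + x * ρ l y)
    (hsq : ∃ x y : B, x * y ≠ 0)
    (hLsimple : ∀ I : TwoSidedIdeal B, (∀ l : L, ∀ x ∈ I, ρ l x ∈ I) → I = ⊥ ∨ I = ⊤) :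
    ∀ I : TwoSidedIdeal B, I = ⊥ ∨ I = ⊤ :=
  L_simple_implies_simple_general F B L ρ hder hLsimple
end

section
/- Let $F$ be a field of characteristic zero, $A$ a finite dimensional associative algebra over $F$ with Jacobson radical $J$, and suppose the semisimple quotient decomposes as $A/J = A_1 \oplus \cdots \oplus A_l$ with each $A_i \cong F$ one-dimensional, lifted to orthogonal idempotents with $A_i A_k = A_i J A_k = \{0\}$ for all $i \neq k$. Then, setting $B_i = A_i + J$, any multilinear polynomial $f$ that vanishes on every $B_i$ and on $J$ also vanishes on $A$. -/
/-!
By multilinearity it suffices to evaluate `f` on tuples of elements of `J ∪ {e₁, …, e_l}`, which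
spans `A`. If only one idempotent `eᵢ` occurs in such a tuple, the tuple lies in `Bᵢ = F eᵢ + J`
(or in `J` if none occurs), where `f` vanishes by hypothesis. If two different idempotents occur,
every monomial vanishes: between an occurrence of `eᵢ` and the next occurrence of some `e_k` with
`k ≠ i` there are only factors `eᵢ` and elements of `J`, and any `u * eᵢ` annihilates `e_k` and
`J * e_k` on the right by `eᵢ e_k = eᵢ J e_k = 0`.
-/

theorem MultilinearMap.eq_zero_of_span_eq_top {K V W ι : Type*} [Field K] [AddCommGroup V]
    [Module K V] [AddCommMonoid W] [Module K W] [Finite ι] {S : Set V}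
    (hS : Submodule.span K S = ⊤) (f : MultilinearMap K (fun _ : ι => V) W)
    (hf : ∀ v : ι → V, (∀ i, v i ∈ S) → f v = 0) : f = 0 := by
  obtain ⟨s, hsS, hspan, hli⟩ := exists_linearIndependent K S
  let B := Module.Basis.mk hli (by rw [Subtype.range_coe, hspan, hS])
  exact Module.Basis.ext_multilinear (fun _ => B) fun v => by
    simpa [B] using hf _ fun i => hsS (v i).2

theorem Option.exists_two_some_or_forall_eq_none_or_exists {β ι : Type*} (f : β → Option ι) :
    (∃ r r' i k, i ≠ k ∧ f r = some i ∧ f r' = some k) ∨ (∀ r, f r = none) ∨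
      ∃ i, ∀ r, f r = none ∨ f r = some i := by
  by_cases h : ∃ r r' i k, i ≠ k ∧ f r = some i ∧ f r' = some k
  · exact .inl h
  refine .inr ?_
  by_cases h' : ∃ r i, f r = some i
  · obtain ⟨r₀, i₀, h₀⟩ := h'
    refine .inr ⟨i₀, fun r => ?_⟩
    rcases hr : f r with _ | m
    · exact .inl rfl
    · exact .inr (by_contra fun hm => h ⟨r, r₀, m, i₀, fun hmi => hm (hmi ▸ rfl), hr, h₀⟩)
  · exact .inl fun r => Option.eq_none_iff_forall_ne_some.2 fun i hi => h' ⟨r, i, hi⟩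

section OrthogonalIdempotents

variable {M ι β : Type*} [MonoidWithZero M] (J : Subsemigroup M) (e : ι → M)

/-- Letters are labelled rather than identified by their value, since `e` need not be
injective. -/
def letterSet : Option ι → Set M
  | none => J
  | some m => {e m}

def KillsOtherIdempotents (i : ι) (u : M) : Prop :=
  ∀ k ≠ i, u * e k = 0 ∧ ∀ j ∈ J, u * j * e k = 0

variable {J e}

theorem killsOtherIdempotents_mul (horth : ∀ i k, i ≠ k → e i * e k = 0)
    (horthJ : ∀ i k, i ≠ k → ∀ j ∈ J, e i * j * e k = 0) (u : M) (i : ι) :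
    KillsOtherIdempotents J e i (u * e i) := fun k hk =>
  ⟨by rw [mul_assoc, horth i k hk.symm, mul_zero], fun j hj => by
    rw [mul_assoc u, mul_assoc u, horthJ i k hk.symm j hj, mul_zero]⟩

theorem KillsOtherIdempotents.mul_mem {i : ι} {u j : M} (hu : KillsOtherIdempotents J e i u)
    (hj : j ∈ J) : KillsOtherIdempotents J e i (u * j) := fun k hk =>
  ⟨(hu k hk).2 j hj, fun j' hj' => by rw [mul_assoc u, (hu k hk).2 _ (J.mul_mem hj hj')]⟩

variable {lab : β → Option ι} {b : β → M}

theorem KillsOtherIdempotents.mul_prod_map_eq_zero (horth : ∀ i k, i ≠ k → e i * e k = 0)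
    (horthJ : ∀ i k, i ≠ k → ∀ j ∈ J, e i * j * e k = 0)
    (hb : ∀ x, b x ∈ letterSet J e (lab x)) {i k : ι} (hki : k ≠ i) {L : List β} {x : β}
    (hx : x ∈ L) (hlx : lab x = some k) {u : M} (hu : KillsOtherIdempotents J e i u) :
    u * (L.map b).prod = 0 := by
  induction L generalizing u with
  | nil => simp at hx
  | cons y L ih =>
    have hx' (hy : lab y ≠ some k) : x ∈ L :=
      (List.mem_cons.1 hx).resolve_left fun hxy => hy (hxy ▸ hlx)
    rw [List.map_cons, List.prod_cons, ← mul_assoc]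
    rcases hly : lab y with _ | m
    · exact ih (hx' (by simp [hly])) (hu.mul_mem (by simpa [hly, letterSet] using hb y))
    · have hby : b y = e m := by simpa [hly, letterSet] using hb y
      rw [hby]
      by_cases hmi : m = i
      · subst hmi
        exact ih (hx' (by simpa [hly] using hki.symm)) (killsOtherIdempotents_mul horth horthJ u m)
      · rw [(hu m hmi).1, zero_mul]

theorem prod_map_eq_zero_of_two_labels (horth : ∀ i k, i ≠ k → e i * e k = 0)
    (horthJ : ∀ i k, i ≠ k → ∀ j ∈ J, e i * j * e k = 0)
    (hb : ∀ x, b x ∈ letterSet J e (lab x)) {L : List β} {x y : β} (hx : x ∈ L) (hy : y ∈ L)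
    {i k : ι} (hik : i ≠ k) (hlx : lab x = some i) (hly : lab y = some k) :
    (L.map b).prod = 0 := by
  induction L with
  | nil => simp at hx
  | cons z L ih =>
    rw [List.map_cons, List.prod_cons]
    have mem_tail {w : β} {n : ι} (hw : w ∈ z :: L) (hlw : lab w = some n) (hz : lab z ≠ some n) :
        w ∈ L :=
      (List.mem_cons.1 hw).resolve_left fun hwz => hz (hwz ▸ hlw)
    rcases hlz : lab z with _ | m
    · rw [ih (mem_tail hx hlx (by simp [hlz])) (mem_tail hy hly (by simp [hlz])), mul_zero]
    · have hbz : b z = e m := by simpa [hlz, letterSet] using hb z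
      have hm : KillsOtherIdempotents J e m (e m) := by
        simpa using killsOtherIdempotents_mul horth horthJ 1 m
      rw [hbz]
      by_cases hmi : m = i
      · subst hmi
        exact hm.mul_prod_map_eq_zero horth horthJ hb hik.symm
          (mem_tail hy hly (by simpa [hlz] using hik)) hly
      · exact hm.mul_prod_map_eq_zero horth horthJ hb (Ne.symm hmi)
          (mem_tail hx hlx (by simpa [hlz] using hmi)) hlx

end OrthogonalIdempotents

section MultilinearPolynomial

variable (F A : Type*) [CommSemiring F] [Semiring A] [Algebra F A] {t : ℕ}

def multilinearPolynomialMap (c : Equiv.Perm (Fin t) → F) :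
    MultilinearMap F (fun _ : Fin t => A) A :=
  ∑ σ, c σ • (MultilinearMap.mkPiAlgebraFin F t A).domDomCongr σ

theorem multilinearPolynomialMap_apply (c : Equiv.Perm (Fin t) → F) (a : Fin t → A) :
    multilinearPolynomialMap F A c a = ∑ σ, c σ • (List.ofFn fun r => a (σ r)).prod := by
  simp [multilinearPolynomialMap, MultilinearMap.domDomCongr_apply,
    MultilinearMap.mkPiAlgebraFin_apply]

end MultilinearPolynomial

theorem multilinear_identity_from_components_general (F : Type*) (A : Type*) [Field F]
    [Ring A] [Algebra F A]
    (J : Submodule F A)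
    (hJ : J = ((⊥ : TwoSidedIdeal A).jacobson.asIdeal).restrictScalars F)
    (l : ℕ) (e : Fin l → A)
    (horth : ∀ i k, i ≠ k → e i * e k = 0)
    (horthJ : ∀ i k, i ≠ k → ∀ j ∈ J, e i * j * e k = 0)
    (hspan : ∀ a : A, a ∈ Submodule.span F (Set.range e) ⊔ J)
    (t : ℕ) (c : Equiv.Perm (Fin t) → F)
    (hvanish : ∀ i : Fin l, ∀ a : Fin t → A,
      (∀ r, a r ∈ Submodule.span F {e i} ⊔ J) →
      ∑ σ : Equiv.Perm (Fin t), c σ • (List.ofFn fun r => a (σ r)).prod = 0)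
    (hvanishJ : ∀ a : Fin t → A, (∀ r, a r ∈ J) →
      ∑ σ : Equiv.Perm (Fin t), c σ • (List.ofFn fun r => a (σ r)).prod = 0) :
    ∀ a : Fin t → A,
      ∑ σ : Equiv.Perm (Fin t), c σ • (List.ofFn fun r => a (σ r)).prod = 0 := by
  let JS : Subsemigroup A := ⟨J, fun {x y} hx _ => by
    subst hJ
    exact TwoSidedIdeal.mem_asIdeal.2 <|
      TwoSidedIdeal.mul_mem_right _ x y (TwoSidedIdeal.mem_asIdeal.1 hx)⟩
  have hS : Submodule.span F (⋃ o, letterSet JS e o) = ⊤ := by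
    rw [Set.iUnion_option, Submodule.span_union, sup_comm, Submodule.eq_top_iff']
    simpa [letterSet, JS, Set.iUnion_singleton_eq_range] using hspan
  suffices multilinearPolynomialMap F A c = 0 by
    intro a
    rw [← multilinearPolynomialMap_apply, this, zero_apply]
  refine MultilinearMap.eq_zero_of_span_eq_top hS _ fun b hb => ?_
  choose lab hlab using fun r => Set.mem_iUnion.1 (hb r)
  rw [multilinearPolynomialMap_apply]
  rcases Option.exists_two_some_or_forall_eq_none_or_exists lab with
    ⟨r, r', i, k, hik, hr, hr'⟩ | ho | ⟨i, ho⟩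
  · refine Finset.sum_eq_zero fun σ _ => ?_
    have mem (x : Fin t) : x ∈ List.ofFn σ := List.mem_ofFn.2 ⟨σ.symm x, σ.apply_symm_apply x⟩
    rw [show (List.ofFn fun r => b (σ r)) = (List.ofFn σ).map b from List.map_ofFn.symm,
      prod_map_eq_zero_of_two_labels horth horthJ hlab (mem r) (mem r') hik hr hr', smul_zero]
  · exact hvanishJ b fun r => by simpa [ho r, letterSet, JS] using hlab r
  · refine hvanish i b fun r => ?_
    have hbr := hlab r
    rcases ho r with h | h <;> simp only [h, letterSet] at hbr
    · exact Submodule.mem_sup_right hbr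
    · exact Submodule.mem_sup_left (Submodule.subset_span hbr)

/-- Let `A` be a finite dimensional algebra over a field `F` of characteristic zero with
Jacobson radical `J`, and suppose the semisimple part is spanned by nonzero orthogonal
idempotents `e 1, …, e l` (each component `Aᵢ = F·(e i)` one-dimensional), with
`Aᵢ A_k = Aᵢ J A_k = 0` for `i ≠ k`, and `A = A₁ ⊕ ⋯ ⊕ A_l + J`. Then any multilinear
polynomial `f = ∑_σ c_σ x_{σ(1)} ⋯ x_{σ(t)}` which vanishes on every `Bᵢ = Aᵢ + J`
(and hence on `J`) vanishes on all of `A`. -/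
theorem multilinear_identity_from_components (F : Type*) (A : Type*) [Field F] [CharZero F]
    [Ring A] [Algebra F A] [FiniteDimensional F A]
    (J : Submodule F A)
    (hJ : J = ((⊥ : TwoSidedIdeal A).jacobson.asIdeal).restrictScalars F)
    (l : ℕ) (e : Fin l → A)
    (hidem : ∀ i, e i * e i = e i) (hne : ∀ i, e i ≠ 0)
    (horth : ∀ i k, i ≠ k → e i * e k = 0)
    (horthJ : ∀ i k, i ≠ k → ∀ j ∈ J, e i * j * e k = 0)
    (hspan : ∀ a : A, a ∈ Submodule.span F (Set.range e) ⊔ J)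
    (t : ℕ) (c : Equiv.Perm (Fin t) → F)
    (hvanish : ∀ i : Fin l, ∀ a : Fin t → A,
      (∀ r, a r ∈ Submodule.span F {e i} ⊔ J) →
      ∑ σ : Equiv.Perm (Fin t), c σ • (List.ofFn fun r => a (σ r)).prod = 0)
    (hvanishJ : ∀ a : Fin t → A, (∀ r, a r ∈ J) →
      ∑ σ : Equiv.Perm (Fin t), c σ • (List.ofFn fun r => a (σ r)).prod = 0) :
    ∀ a : Fin t → A,
      ∑ σ : Equiv.Perm (Fin t), c σ • (List.ofFn fun r => a (σ r)).prod = 0 :=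
  multilinear_identity_from_components_general F A J hJ l e horth horthJ hspan t c hvanish hvanishJ
end
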